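/- Let I be an ideal in ℝ[x₁,…,x_n] of Hilbert dimension d, defined as the maximal size of a subset S of the variables such that no leading monomial of I (with respect to a fixed monomial order) lies in the subring generated by S. Then there exists k ∈ ℕ such that every monomial x^α with more than d of the exponents α_i greater than k lies in the monomial ideal LT(I) of leading terms. -/
import Mathlib


open MvPolynomial

/-- `μ` is the leading monomial (exponent) of `p` with respect to the monomial order `m`. -/
def IsLeadingMonomial {n : ℕ} (m : MonomialOrder (Fin n)) (p : MvPolynomial (Fin n) ℝ)
    (μ : Fin n →₀ ℕ) : Prop :=
  μ ∈ p.support ∧ ∀ ν ∈ p.support, m.toSyn ν ≤ m.toSyn μ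

/-- The set of leading monomials of nonzero elements of an ideal. -/
def LeadingMonomials {n : ℕ} (m : MonomialOrder (Fin n))
    (I : Ideal (MvPolynomial (Fin n) ℝ)) : Set (Fin n →₀ ℕ) :=
  {μ | ∃ p ∈ I, p ≠ 0 ∧ IsLeadingMonomial m p μ}

/-- `L` (a set of monomials) has Hilbert dimension `d`: `d` is the maximal size of a set `S`
of variables such that no monomial built only from the variables of `S` lies in `L`. -/
def HasHilbertDim {n : ℕ} (L : Set (Fin n →₀ ℕ)) (d : ℕ) : Prop :=
  (∃ S : Finset (Fin n), S.card = d ∧ ∀ μ : Fin n →₀ ℕ, μ.support ⊆ S → μ ∉ L) ∧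
  ∀ S : Finset (Fin n), (∀ μ : Fin n →₀ ℕ, μ.support ⊆ S → μ ∉ L) → S.card ≤ d

/-- Lemma 4.2: if `I` has Hilbert dimension `d`, then there is `k` such that every monomial
with more than `d` exponents greater than `k` lies in the monomial ideal `⟨LT(I)⟩`,
i.e. is divisible by a leading monomial of `I`. -/
theorem stmt_9 {n : ℕ} (m : MonomialOrder (Fin n)) (I : Ideal (MvPolynomial (Fin n) ℝ))
    (d : ℕ) (hd : HasHilbertDim (LeadingMonomials m I) d) :
    ∃ k : ℕ, ∀ α : Fin n →₀ ℕ,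
      d < (Finset.univ.filter fun i => k < α i).card →
      ∃ ν ∈ LeadingMonomials m I, ν ≤ α := by
  classical
  obtain ⟨-, hmax⟩ := hd
  have key : ∀ S : Finset (Fin n), S.card = d + 1 →
      ∃ μ : Fin n →₀ ℕ, μ.support ⊆ S ∧ μ ∈ LeadingMonomials m I := by
    intro S hS
    by_contra h
    push_neg at h
    have := hmax S (fun μ hμ => h μ hμ)
    omega
  choose f hf1 hf2 using key
  set g : Finset (Fin n) → ℕ := fun S =>
    if h : S.card = d + 1 then (f S h).support.sup (f S h) else 0 with hg
  set k := (Finset.univ.powersetCard (d + 1)).sup g with hk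
  refine ⟨k, fun α hα => ?_⟩
  obtain ⟨S, hSsub, hScard⟩ := Finset.exists_subset_card_eq
    (show d + 1 ≤ (Finset.univ.filter fun i => k < α i).card by omega)
  refine ⟨f S hScard, hf2 S hScard, ?_⟩
  intro i
  by_cases hi : i ∈ (f S hScard).support
  · have hiS : i ∈ Finset.univ.filter fun i => k < α i := hSsub (hf1 S hScard hi)
    have hik : k < α i := (Finset.mem_filter.mp hiS).2
    have h1 : f S hScard i ≤ (f S hScard).support.sup (f S hScard) :=
      Finset.le_sup hi
    have hmem : S ∈ Finset.univ.powersetCard (d + 1) := by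
      simp [Finset.mem_powersetCard, hScard]
    have h2 : g S ≤ k := Finset.le_sup hmem
    have h3 : g S = (f S hScard).support.sup (f S hScard) := by
      simp [hg, hScard]
    omega
  · simp [Finsupp.notMem_support_iff.mp hi]
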